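/- Let M̂ and M̃ be symmetric positive definite N×N real matrices with M̂ entrywise non-negative, satisfying the entrywise perturbation bound |[M̃]_{i,j} − [M̂]_{i,j}| ≤ σ [M̂]_{i,j} with σ κ(M̂) < 1. Then the condition number of the generalized eigenvalue problem satisfies κ := (max_{w≠0} wᵀM̃w/wᵀM̂w)/(min_{w≠0} wᵀM̃w/wᵀM̂w) ≤ (1 + σ κ(M̂))/(1 − σ κ(M̂)). -/

import Mathlib

/-!
Entrywise, `|M̃ - M̂| ≤ σ M̂`, so for every `w`
`|wᵀ(M̃ - M̂)w| ≤ σ |w|ᵀ M̂ |w| ≤ σ λ_max ‖w‖² ≤ σ κ(M̂) wᵀM̂w`.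
Hence every generalized Rayleigh quotient `wᵀM̃w / wᵀM̂w` lies in `[1 - σκ(M̂), 1 + σκ(M̂)]`,
and the ratio of the largest to the smallest is at most `(1 + σκ(M̂)) / (1 - σκ(M̂))`.
-/

open Matrix

theorem Real.sSup_div_sInf_le_of_subset_Icc {s : Set ℝ} {a b : ℝ} (ha : 0 < a) (hab : a ≤ b)
    (hs : s ⊆ Set.Icc a b) : sSup s / sInf s ≤ b / a := by
  rcases s.eq_empty_or_nonempty with rfl | hne
  · simpa using div_nonneg (ha.le.trans hab) ha.le
  exact div_le_div₀ (ha.le.trans hab) (csSup_le hne fun x hx => (hs hx).2) ha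
    (le_csInf hne fun x hx => (hs hx).1)

namespace Matrix

open scoped MatrixOrder

variable {m n : Type*} [Fintype m] [Fintype n]

theorem abs_dotProduct_mulVec_le {B C : Matrix m n ℝ} (hBC : ∀ i j, |B i j| ≤ C i j)
    (v : m → ℝ) (w : n → ℝ) : |v ⬝ᵥ B *ᵥ w| ≤ |v| ⬝ᵥ C *ᵥ |w| := by
  simp only [dotProduct, mulVec, Finset.mul_sum, Pi.abs_apply]
  refine (Finset.abs_sum_le_sum_abs _ _).trans (Finset.sum_le_sum fun i _ => ?_)
  refine (Finset.abs_sum_le_sum_abs _ _).trans (Finset.sum_le_sum fun j _ => ?_)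
  rw [abs_mul, abs_mul]
  gcongr
  exact hBC i j

theorem abs_dotProduct_abs (w : n → ℝ) : |w| ⬝ᵥ |w| = w ⬝ᵥ w := by
  simp only [dotProduct, Pi.abs_apply, abs_mul_abs_self]

variable [DecidableEq n] {A : Matrix n n ℝ}

theorem IsHermitian.mul_dotProduct_self_le_of_le_spectrum (hA : A.IsHermitian) {r : ℝ}
    (hr : ∀ x ∈ spectrum ℝ A, r ≤ x) (w : n → ℝ) : r * (w ⬝ᵥ w) ≤ w ⬝ᵥ A *ᵥ w := by
  have hpsd : (A - algebraMap ℝ _ r).PosSemidef :=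
    algebraMap_le_of_le_spectrum hr hA.isSelfAdjoint
  simpa [sub_mulVec, Algebra.algebraMap_eq_smul_one, smul_mulVec, dotProduct_smul] using
    hpsd.dotProduct_mulVec_nonneg w

theorem IsHermitian.dotProduct_mulVec_le_of_spectrum_le (hA : A.IsHermitian) {r : ℝ}
    (hr : ∀ x ∈ spectrum ℝ A, x ≤ r) (w : n → ℝ) : w ⬝ᵥ A *ᵥ w ≤ r * (w ⬝ᵥ w) := by
  have hpsd : (algebraMap ℝ _ r - A).PosSemidef :=
    le_algebraMap_of_spectrum_le hr hA.isSelfAdjoint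
  simpa [sub_mulVec, Algebra.algebraMap_eq_smul_one, smul_mulVec, dotProduct_smul] using
    hpsd.dotProduct_mulVec_nonneg w

theorem PosDef.sInf_spectrum_pos [Nonempty n] (hA : A.PosDef) : 0 < sInf (spectrum ℝ A) :=
  hA.isStrictlyPositive.spectrum_pos <| Set.Nonempty.csInf_mem
    ⟨_, hA.1.eigenvalues_mem_spectrum_real (Classical.arbitrary n)⟩ A.finite_spectrum

theorem PosDef.spectrum_ratio_nonneg (hA : A.PosDef) :
    0 ≤ sSup (spectrum ℝ A) / sInf (spectrum ℝ A) := by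
  have hpos : ∀ x ∈ spectrum ℝ A, 0 ≤ x := fun _ hx => (hA.isStrictlyPositive.spectrum_pos hx).le
  exact div_nonneg (Real.sSup_nonneg hpos) (Real.sInf_nonneg hpos)

variable {Mh Mt : Matrix n n ℝ} {σ : ℝ}

theorem PosDef.abs_dotProduct_mulVec_sub_le (hMh : Mh.PosDef) (hσ : 0 ≤ σ)
    (hpert : ∀ i j, |Mt i j - Mh i j| ≤ σ * Mh i j) (w : n → ℝ) :
    |w ⬝ᵥ Mt *ᵥ w - w ⬝ᵥ Mh *ᵥ w| ≤
      σ * (sSup (spectrum ℝ Mh) / sInf (spectrum ℝ Mh)) * (w ⬝ᵥ Mh *ᵥ w) := by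
  cases isEmpty_or_nonempty n
  · simp [Subsingleton.elim w 0]
  set lmax := sSup (spectrum ℝ Mh)
  set lmin := sInf (spectrum ℝ Mh)
  have hlmin : 0 < lmin := hMh.sInf_spectrum_pos
  have hmax : ∀ x ∈ spectrum ℝ Mh, x ≤ lmax := fun _ hx => le_csSup Mh.finite_spectrum.bddAbove hx
  have hmin : ∀ x ∈ spectrum ℝ Mh, lmin ≤ x := fun _ hx => csInf_le Mh.finite_spectrum.bddBelow hx
  calc |w ⬝ᵥ Mt *ᵥ w - w ⬝ᵥ Mh *ᵥ w| = |w ⬝ᵥ (Mt - Mh) *ᵥ w| := by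
        rw [sub_mulVec, dotProduct_sub]
    _ ≤ |w| ⬝ᵥ (σ • Mh) *ᵥ |w| := abs_dotProduct_mulVec_le (by simpa using hpert) w w
    _ = σ * (|w| ⬝ᵥ Mh *ᵥ |w|) := by rw [smul_mulVec, dotProduct_smul, smul_eq_mul]
    _ ≤ σ * (lmax * (w ⬝ᵥ w)) := by
        rw [← abs_dotProduct_abs w]
        gcongr
        exact hMh.1.dotProduct_mulVec_le_of_spectrum_le hmax |w|
    _ = σ * (lmax / lmin) * (lmin * (w ⬝ᵥ w)) := by field_simp
    _ ≤ σ * (lmax / lmin) * (w ⬝ᵥ Mh *ᵥ w) := by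
        gcongr
        · exact mul_nonneg hσ hMh.spectrum_ratio_nonneg
        · exact hMh.1.mul_dotProduct_self_le_of_le_spectrum hmin w

theorem PosDef.div_dotProduct_mulVec_mem_Icc (hMh : Mh.PosDef) (hσ : 0 ≤ σ)
    (hpert : ∀ i j, |Mt i j - Mh i j| ≤ σ * Mh i j) {w : n → ℝ} (hw : w ≠ 0) :
    (w ⬝ᵥ Mt *ᵥ w) / (w ⬝ᵥ Mh *ᵥ w) ∈
      Set.Icc (1 - σ * (sSup (spectrum ℝ Mh) / sInf (spectrum ℝ Mh)))
        (1 + σ * (sSup (spectrum ℝ Mh) / sInf (spectrum ℝ Mh))) := by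
  have hd : 0 < w ⬝ᵥ Mh *ᵥ w := by simpa using hMh.dotProduct_mulVec_pos hw
  have h := hMh.abs_dotProduct_mulVec_sub_le hσ hpert w
  rw [abs_le] at h
  constructor
  · rw [le_div_iff₀ hd]; linarith
  · rw [div_le_iff₀ hd]; linarith

end Matrix

theorem generalized_cond_perturbation_general {N : ℕ}
    (Mh Mt : Matrix (Fin N) (Fin N) ℝ) (hMh : Mh.PosDef)
    (σ : ℝ) (hσ : 0 ≤ σ)
    (hpert : ∀ i j, |Mt i j - Mh i j| ≤ σ * Mh i j)
    (hcond : σ * (sSup (spectrum ℝ Mh) / sInf (spectrum ℝ Mh)) < 1) :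
    sSup {x : ℝ | ∃ w : Fin N → ℝ, w ≠ 0 ∧
        x = (w ⬝ᵥ Mt.mulVec w) / (w ⬝ᵥ Mh.mulVec w)} /
      sInf {x : ℝ | ∃ w : Fin N → ℝ, w ≠ 0 ∧
        x = (w ⬝ᵥ Mt.mulVec w) / (w ⬝ᵥ Mh.mulVec w)} ≤
      (1 + σ * (sSup (spectrum ℝ Mh) / sInf (spectrum ℝ Mh))) /
        (1 - σ * (sSup (spectrum ℝ Mh) / sInf (spectrum ℝ Mh))) := by
  have hκ := mul_nonneg hσ hMh.spectrum_ratio_nonneg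
  refine Real.sSup_div_sInf_le_of_subset_Icc (by linarith) (by linarith) ?_
  rintro _ ⟨w, hw, rfl⟩
  exact hMh.div_dotProduct_mulVec_mem_Icc hσ hpert hw

/-- Under the entrywise perturbation bound with `σ κ(M̂) < 1`, the generalized condition number
`(max_w wᵀM̃w/wᵀM̂w)/(min_w wᵀM̃w/wᵀM̂w)` is bounded by `(1 + σκ(M̂))/(1 − σκ(M̂))`. -/
theorem generalized_cond_perturbation {N : ℕ}
    (Mh Mt : Matrix (Fin N) (Fin N) ℝ) (hMh : Mh.PosDef) (hMt : Mt.PosDef)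
    (hnn : ∀ i j, 0 ≤ Mh i j) (σ : ℝ) (hσ : 0 ≤ σ)
    (hpert : ∀ i j, |Mt i j - Mh i j| ≤ σ * Mh i j)
    (hcond : σ * (sSup (spectrum ℝ Mh) / sInf (spectrum ℝ Mh)) < 1) :
    sSup {x : ℝ | ∃ w : Fin N → ℝ, w ≠ 0 ∧
        x = (w ⬝ᵥ Mt.mulVec w) / (w ⬝ᵥ Mh.mulVec w)} /
      sInf {x : ℝ | ∃ w : Fin N → ℝ, w ≠ 0 ∧
        x = (w ⬝ᵥ Mt.mulVec w) / (w ⬝ᵥ Mh.mulVec w)} ≤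
      (1 + σ * (sSup (spectrum ℝ Mh) / sInf (spectrum ℝ Mh))) /
        (1 - σ * (sSup (spectrum ℝ Mh) / sInf (spectrum ℝ Mh))) :=
  generalized_cond_perturbation_general Mh Mt hMh σ hσ hpert hcond
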